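/- Let μ > 0 and let p ∈ V_μ with CDF F_n = ∑_{m≤n} p_m. Then G[p] = 1 − (1/μ) ∑_{n≥0} (1 − F_n)². -/

import Mathlib

/-!
Writing `|i - j| = #{n | min i j ≤ n < max i j}` and summing over `n` first (Tonelli, in `ℝ≥0∞`)
turns `∑ᵢ ∑ⱼ |i - j| pᵢ pⱼ` into `∑ₙ 2 Fₙ (1 - Fₙ)`, since the pairs with `i ≤ n < j` carry mass
`Fₙ (1 - Fₙ)`. The same exchange gives the tail-sum formula `∑ₙ (1 - Fₙ) = μ`, so
`∑ₙ 2 Fₙ (1 - Fₙ) = 2 (μ - ∑ₙ (1 - Fₙ)²)`.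
-/

/-- Cumulative distribution function of a pmf on ℕ: `F n = ∑_{m ≤ n} p m`. -/
noncomputable def cdf (p : ℕ → ℝ) (n : ℕ) : ℝ := ∑ m ∈ Finset.range (n + 1), p m

/-- Wasserstein-1 distance between two pmfs on ℕ, `W1(p,q) = ∑_{n ≥ 0} |F_n - H_n|`. -/
noncomputable def W1 (p q : ℕ → ℝ) : ℝ := ∑' n : ℕ, |cdf p n - cdf q n|

/-- Gini index of a pmf on ℕ with mean μ: `G[p] = (1/(2μ)) ∑_i ∑_j |i-j| p_i p_j`. -/
noncomputable def Gini (μ : ℝ) (p : ℕ → ℝ) : ℝ :=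
  (1 / (2 * μ)) * ∑' i : ℕ, ∑' j : ℕ, |(i : ℝ) - (j : ℝ)| * p i * p j

/-- The shifted Bernoulli distribution with mean μ:
`p*_{⌊μ⌋} = 1 - μ + ⌊μ⌋`, `p*_{⌊μ⌋+1} = μ - ⌊μ⌋`, `p*_n = 0` otherwise. -/
noncomputable def pstar (μ : ℝ) : ℕ → ℝ := fun n =>
  if n = ⌊μ⌋₊ then 1 - μ + (⌊μ⌋₊ : ℝ)
  else if n = ⌊μ⌋₊ + 1 then μ - (⌊μ⌋₊ : ℝ)
  else 0

/-- The Dirac distribution on ℕ concentrated at `k`. -/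
noncomputable def dirac (k : ℕ) : ℕ → ℝ := fun n => if n = k then 1 else 0

open scoped ENNReal

lemma ENNReal.tsum_ofReal_of_hasSum {α : Type*} {f : α → ℝ} {a : ℝ} (hf : ∀ x, 0 ≤ f x)
    (h : HasSum f a) : ∑' x, ENNReal.ofReal (f x) = ENNReal.ofReal a := by
  rw [← ENNReal.ofReal_tsum_of_nonneg hf h.summable, h.tsum_eq]

lemma hasSum_of_tsum_ofReal_eq {α : Type*} {f : α → ℝ} {a : ℝ} (hf : ∀ x, 0 ≤ f x) (ha : 0 ≤ a)
    (h : ∑' x, ENNReal.ofReal (f x) = ENNReal.ofReal a) : HasSum f a := by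
  have := ENNReal.hasSum_toReal (h ▸ ENNReal.ofReal_ne_top)
  rw [← ENNReal.tsum_toReal_eq fun _ => ENNReal.ofReal_ne_top, h, ENNReal.toReal_ofReal ha] at this
  simpa only [ENNReal.toReal_ofReal (hf _)] using this

lemma tsum_tsum_eq_of_tsum_tsum_ofReal_eq {α β γ : Type*} {g : α → β → ℝ} {h : γ → ℝ}
    (hg : ∀ a b, 0 ≤ g a b) (hh : ∀ c, 0 ≤ h c) (hs : Summable h)
    (H : ∑' a, ∑' b, ENNReal.ofReal (g a b) = ∑' c, ENNReal.ofReal (h c)) :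
    ∑' a, ∑' b, g a b = ∑' c, h c := by
  have hfin : ∀ a, ∑' b, ENNReal.ofReal (g a b) ≠ ∞ := fun a =>
    ne_top_of_le_ne_top (H ▸ hs.tsum_ofReal_ne_top) (ENNReal.le_tsum a)
  calc ∑' a, ∑' b, g a b = ∑' a, (∑' b, ENNReal.ofReal (g a b)).toReal := by
        simp_rw [ENNReal.tsum_toReal_eq fun _ => ENNReal.ofReal_ne_top,
          ENNReal.toReal_ofReal (hg _ _)]
    _ = (∑' a, ∑' b, ENNReal.ofReal (g a b)).toReal := (ENNReal.tsum_toReal_eq hfin).symm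
    _ = ∑' c, h c := by
        rw [H, ← ENNReal.ofReal_tsum_of_nonneg hh hs, ENNReal.toReal_ofReal (tsum_nonneg hh)]

namespace ENNReal

variable (q : ℕ → ℝ≥0∞)

lemma tsum_indicator_Ico_const (a b : ℕ) (c : ℝ≥0∞) :
    ∑' n, (Set.Ico a b).indicator (fun _ => c) n = (b - a : ℕ) * c := by
  rw [tsum_eq_sum (s := Finset.Ico a b) fun n hn => Set.indicator_of_notMem (by simpa using hn) _,
    Finset.sum_congr rfl fun n hn => Set.indicator_of_mem (by simpa using hn) _]
  simp

lemma ofReal_abs_natCast_sub (i j : ℕ) :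
    ENNReal.ofReal |(i : ℝ) - j| = (j - i : ℕ) + (i - j : ℕ) := by
  rcases le_total i j with h | h
  · rw [abs_of_nonpos (by simpa using h), Nat.sub_eq_zero_of_le h]
    simp [← Nat.cast_sub h]
  · rw [abs_of_nonneg (by simpa using h), Nat.sub_eq_zero_of_le h]
    simp [← Nat.cast_sub h]

lemma ofReal_abs_natCast_sub_mul_mul (i j : ℕ) :
    ENNReal.ofReal |(i : ℝ) - j| * q i * q j = ∑' n,
      ((Set.Iic n).indicator q i * (Set.Ioi n).indicator q j +
        (Set.Ioi n).indicator q i * (Set.Iic n).indicator q j) := by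
  have hIco : ∀ a b n, (Set.Iic n).indicator q a * (Set.Ioi n).indicator q b =
      (Set.Ico a b).indicator (fun _ => q a * q b) n := by
    intro a b n
    by_cases ha : a ≤ n <;> by_cases hb : n < b <;> simp [Set.indicator, ha, hb]
  simp only [mul_comm ((Set.Ioi _).indicator q i), hIco, ENNReal.tsum_add,
    tsum_indicator_Ico_const, ofReal_abs_natCast_sub]
  ring

theorem tsum_tsum_ofReal_abs_natCast_sub_mul_mul :
    ∑' i : ℕ, ∑' j : ℕ, ENNReal.ofReal |(i : ℝ) - j| * q i * q j =
      ∑' n, 2 * ((∑' i, (Set.Iic n).indicator q i) * ∑' j, (Set.Ioi n).indicator q j) := by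
  simp_rw [ofReal_abs_natCast_sub_mul_mul]
  conv_lhs => enter [1, i]; rw [ENNReal.tsum_comm]
  rw [ENNReal.tsum_comm]
  refine tsum_congr fun n => ?_
  simp only [ENNReal.tsum_add, ENNReal.tsum_mul_left, ENNReal.tsum_mul_right]
  ring

theorem tsum_tsum_indicator_Ioi : ∑' n, ∑' j, (Set.Ioi n).indicator q j = ∑' j, j * q j := by
  have hIco : ∀ j n, (Set.Ioi n).indicator q j = (Set.Ico 0 j).indicator (fun _ => q j) n := by
    intro j n
    by_cases h : n < j <;> simp [Set.indicator, h]
  rw [ENNReal.tsum_comm]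
  simp only [hIco, tsum_indicator_Ico_const, Nat.sub_zero]

end ENNReal

lemma hasSum_indicator_Iic_cdf (p : ℕ → ℝ) (n : ℕ) :
    HasSum ((Set.Iic n).indicator p) (cdf p n) := by
  have hIic : Set.Iic n = ↑(Finset.range (n + 1)) := by ext; simp
  rw [hIic, cdf, ← Finset.sum_indicator_subset p subset_rfl]
  exact hasSum_sum_of_ne_finset_zero fun m hm => Set.indicator_of_notMem hm p

section

variable {p : ℕ → ℝ} {μ : ℝ}

lemma hasSum_indicator_Ioi_one_sub_cdf (hsum : HasSum p 1) (n : ℕ) :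
    HasSum ((Set.Ioi n).indicator p) (1 - cdf p n) := by
  rw [← Set.compl_Iic, Set.indicator_compl]
  exact hsum.sub (hasSum_indicator_Iic_cdf p n)

lemma cdf_nonneg (hpos : ∀ n, 0 ≤ p n) (n : ℕ) : 0 ≤ cdf p n :=
  Finset.sum_nonneg fun m _ => hpos m

lemma cdf_le_one (hpos : ∀ n, 0 ≤ p n) (hsum : HasSum p 1) (n : ℕ) : cdf p n ≤ 1 :=
  hasSum_le (Set.indicator_le_self' fun m _ => hpos m) (hasSum_indicator_Iic_cdf p n) hsum

lemma tsum_indicator_ofReal_of_hasSum {s : Set ℕ} (hpos : ∀ n, 0 ≤ p n) {a : ℝ}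
    (h : HasSum (s.indicator p) a) :
    ∑' n, s.indicator (fun n => ENNReal.ofReal (p n)) n = ENNReal.ofReal a := by
  rw [← ENNReal.tsum_ofReal_of_hasSum (Set.indicator_nonneg fun m _ => hpos m) h]
  exact tsum_congr fun n => congr_fun (Set.indicator_comp_of_zero ENNReal.ofReal_zero) n

lemma hasSum_one_sub_cdf (hpos : ∀ n, 0 ≤ p n) (hsum : HasSum p 1)
    (hmean : HasSum (fun n : ℕ => (n : ℝ) * p n) μ) : HasSum (fun n => 1 - cdf p n) μ := by
  have hmean_nonneg : ∀ n : ℕ, 0 ≤ (n : ℝ) * p n := fun n => mul_nonneg n.cast_nonneg (hpos n)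
  refine hasSum_of_tsum_ofReal_eq (fun n => sub_nonneg.2 (cdf_le_one hpos hsum n))
    (hmean.nonneg hmean_nonneg) ?_
  calc ∑' n, ENNReal.ofReal (1 - cdf p n)
      = ∑' n, ∑' j, (Set.Ioi n).indicator (fun n => ENNReal.ofReal (p n)) j :=
        tsum_congr fun n => (tsum_indicator_ofReal_of_hasSum hpos
          (hasSum_indicator_Ioi_one_sub_cdf hsum n)).symm
    _ = ∑' j : ℕ, j * ENNReal.ofReal (p j) := ENNReal.tsum_tsum_indicator_Ioi _
    _ = ENNReal.ofReal μ := by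
        rw [← ENNReal.tsum_ofReal_of_hasSum hmean_nonneg hmean]
        simp [ENNReal.ofReal_mul]

lemma tsum_tsum_abs_natCast_sub_mul_mul (hpos : ∀ n, 0 ≤ p n) (hsum : HasSum p 1)
    (hmean : HasSum (fun n : ℕ => (n : ℝ) * p n) μ) :
    ∑' i : ℕ, ∑' j : ℕ, |(i : ℝ) - j| * p i * p j = ∑' n, 2 * (cdf p n * (1 - cdf p n)) := by
  have hF0 := cdf_nonneg hpos
  have hF1 := cdf_le_one hpos hsum
  have hterm : ∀ n, 0 ≤ 2 * (cdf p n * (1 - cdf p n)) := fun n =>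
    mul_nonneg zero_le_two (mul_nonneg (hF0 n) (sub_nonneg.2 (hF1 n)))
  refine tsum_tsum_eq_of_tsum_tsum_ofReal_eq
    (fun i j => mul_nonneg (mul_nonneg (abs_nonneg _) (hpos i)) (hpos j)) hterm ?_ ?_
  · exact ((hasSum_one_sub_cdf hpos hsum hmean).summable.mul_left 2).of_nonneg_of_le hterm
      fun n => mul_le_mul_of_nonneg_left
        (mul_le_of_le_one_left (sub_nonneg.2 (hF1 n)) (hF1 n)) zero_le_two
  · simp_rw [ENNReal.ofReal_mul (mul_nonneg (abs_nonneg _) (hpos _)),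
      ENNReal.ofReal_mul (abs_nonneg _), ENNReal.tsum_tsum_ofReal_abs_natCast_sub_mul_mul,
      tsum_indicator_ofReal_of_hasSum hpos (hasSum_indicator_Iic_cdf p _),
      tsum_indicator_ofReal_of_hasSum hpos (hasSum_indicator_Ioi_one_sub_cdf hsum _)]
    simp [ENNReal.ofReal_mul, hF0]

end

theorem stmt_17 (μ : ℝ) (hμ : 0 < μ) (p : ℕ → ℝ)
    (hpos : ∀ n, 0 ≤ p n) (hsum : HasSum p 1)
    (hmean : HasSum (fun n : ℕ => (n : ℝ) * p n) μ) :
    Gini μ p = 1 - (1 / μ) * ∑' n : ℕ, (1 - cdf p n) ^ 2 := by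
  have htail := hasSum_one_sub_cdf hpos hsum hmean
  have hsq : Summable fun n => (1 - cdf p n) ^ 2 :=
    htail.summable.of_nonneg_of_le (fun n => sq_nonneg _) fun n =>
      pow_le_of_le_one (sub_nonneg.2 (cdf_le_one hpos hsum n))
        (sub_le_self _ (cdf_nonneg hpos n)) two_ne_zero
  have hsplit : ∀ n, 2 * (cdf p n * (1 - cdf p n)) = 2 * ((1 - cdf p n) - (1 - cdf p n) ^ 2) :=
    fun n => by ring
  rw [Gini, tsum_tsum_abs_natCast_sub_mul_mul hpos hsum hmean, tsum_congr hsplit, tsum_mul_left,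
    htail.summable.tsum_sub hsq, htail.tsum_eq]
  field_simp
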